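/- For every ξ ∈ ℝ³ with ξ ≠ 0, the characteristic polynomial of the Maxwell symbol M_maxwell(ξ) equals X²·(X² − |ξ|²)², so its eigenvalues are |ξ|, 0, −|ξ|, each with multiplicity two; moreover the kernel of M_maxwell(ξ) is the two-dimensional subspace of ℂ⁶ spanned by the vectors (ξ1,ξ2,ξ3,0,0,0) and (0,0,0,ξ1,ξ2,ξ3). -/

import Mathlib

open Complex Polynomial

noncomputable section

/-- The Maxwell symbol `M_maxwell(ξ) = [[O₃, −γ(ξ)],[γ(ξ), O₃]]` where
`γ(ξ) = [[0,−ξ₃,ξ₂],[ξ₃,0,−ξ₁],[−ξ₂,ξ₁,0]]`, written out as a 6×6 matrix. -/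
def maxwellSymbol (ξ : EuclideanSpace ℝ (Fin 3)) : Matrix (Fin 6) (Fin 6) ℂ :=
  !![0, 0, 0, 0, (ξ 2 : ℂ), -(ξ 1 : ℂ);
     0, 0, 0, -(ξ 2 : ℂ), 0, (ξ 0 : ℂ);
     0, 0, 0, (ξ 1 : ℂ), -(ξ 0 : ℂ), 0;
     0, -(ξ 2 : ℂ), (ξ 1 : ℂ), 0, 0, 0;
     (ξ 2 : ℂ), 0, -(ξ 0 : ℂ), 0, 0, 0;
     -(ξ 1 : ℂ), (ξ 0 : ℂ), 0, 0, 0, 0]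

namespace MaxAux

open Matrix

set_option maxHeartbeats 1000000

def M6 (a b c : ℂ) : Matrix (Fin 6) (Fin 6) ℂ :=
  !![0, 0, 0, 0, c, -b;
     0, 0, 0, -c, 0, a;
     0, 0, 0, b, -a, 0;
     0, -c, b, 0, 0, 0;
     c, 0, -a, 0, 0, 0;
     -b, a, 0, 0, 0, 0]

def G3 (a b c : ℂ) : Matrix (Fin 3) (Fin 3) ℂ :=
  !![0, -c, b; c, 0, -a; -b, a, 0]

def G3n (a b c : ℂ) : Matrix (Fin 3) (Fin 3) ℂ :=
  !![0, c, -b; -c, 0, a; b, -a, 0]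

lemma det_blocks {R : Type*} [CommRing R] [IsDomain R] {m : Type*} [DecidableEq m] [Fintype m]
    (A B Cb D : Matrix m m R) (hD : D.det ≠ 0)
    (hcomm : Cb * D = D * Cb) :
    (fromBlocks A B Cb D).det = (A * D - B * Cb).det := by
  have h := congrArg Matrix.det
    (Matrix.fromBlocks_multiply A B Cb D D 0 (-Cb) (1 : Matrix m m R))
  rw [Matrix.det_mul] at h
  have h2 : Cb * D + D * -Cb = 0 := by
    rw [Matrix.mul_neg, ← hcomm]; exact add_neg_cancel _
  rw [h2] at h
  simp only [Matrix.mul_one, Matrix.mul_zero, zero_add, add_zero,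
    Matrix.det_fromBlocks_zero₁₂, Matrix.det_fromBlocks_zero₂₁, Matrix.det_one, mul_one] at h
  have h3 := mul_right_cancel₀ hD h
  rw [h3, Matrix.mul_neg, ← sub_eq_add_neg]

lemma charpoly_M6 (a b c : ℂ) :
    (M6 a b c).charpoly = X ^ 2 * (X ^ 2 - C (a^2+b^2+c^2)) ^ 2 := by
  have hM : M6 a b c = Matrix.reindex finSumFinEquiv finSumFinEquiv
      (fromBlocks 0 (G3n a b c) (G3 a b c) 0) := by
    ext i j
    fin_cases i <;> fin_cases j <;> rfl
  rw [hM, Matrix.charpoly_reindex, Matrix.charpoly, Matrix.charmatrix_fromBlocks]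
  have hX : (charmatrix (0 : Matrix (Fin 3) (Fin 3) ℂ)) = Matrix.scalar (Fin 3) (X : ℂ[X]) := by
    simp [charmatrix, Matrix.scalar_apply]
  rw [hX]
  have hDdet : (Matrix.scalar (Fin 3) (X : ℂ[X])).det ≠ 0 := by
    rw [Matrix.scalar_apply, Matrix.det_diagonal]
    simp only [Finset.prod_const, Finset.card_univ, Fintype.card_fin]
    exact pow_ne_zero _ X_ne_zero
  rw [det_blocks _ _ _ _ hDdet
    ((Matrix.scalar_commute X (fun r => Commute.all X r) _).symm)]
  have hentry : Matrix.scalar (Fin 3) (X : ℂ[X]) * Matrix.scalar (Fin 3) (X : ℂ[X]) -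
      -((G3n a b c).map C) * -((G3 a b c).map C) =
      !![X^2 - C b^2 - C c^2, C a * C b, C a * C c;
         C a * C b, X^2 - C a^2 - C c^2, C b * C c;
         C a * C c, C b * C c, X^2 - C a^2 - C b^2] := by
    ext i j : 1
    fin_cases i <;> fin_cases j
    all_goals simp [G3, G3n, Matrix.mul_apply, Fin.sum_univ_succ, Matrix.scalar_apply,
      Matrix.diagonal]
    all_goals ring
  rw [hentry, Matrix.det_fin_three]
  simp only [Matrix.cons_val', Matrix.cons_val_zero, Matrix.cons_val_one, Matrix.head_cons,
    Matrix.head_fin_const, Matrix.cons_val_fin_one, Matrix.empty_val', Matrix.cons_val_two,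
    Matrix.tail_cons, Matrix.of_apply, map_add, map_pow, C_mul]
  ring

lemma rm3 (r s t : ℂ) (hs : r ≠ s) (ht : r ≠ t) :
    (((X - C r)^2 * ((X - C s)^2 * (X - C t)^2)) : ℂ[X]).rootMultiplicity r = 2 := by
  have h1 : ((X - C r)^2 : ℂ[X]) ≠ 0 := pow_ne_zero _ (X_sub_C_ne_zero r)
  have h2 : ((X - C s)^2 : ℂ[X]) ≠ 0 := pow_ne_zero _ (X_sub_C_ne_zero s)
  have h3 : ((X - C t)^2 : ℂ[X]) ≠ 0 := pow_ne_zero _ (X_sub_C_ne_zero t)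
  rw [Polynomial.rootMultiplicity_mul (mul_ne_zero h1 (mul_ne_zero h2 h3)),
    Polynomial.rootMultiplicity_mul (mul_ne_zero h2 h3),
    Polynomial.rootMultiplicity_X_sub_C_pow,
    Polynomial.rootMultiplicity_eq_zero (by simp [Polynomial.IsRoot, sub_eq_zero, hs]),
    Polynomial.rootMultiplicity_eq_zero (by simp [Polynomial.IsRoot, sub_eq_zero, ht])]

@[simp] lemma cons_val_five {α : Type*} (x : α) (u : Fin 5 → α) :
    Matrix.vecCons x u 5 = u 4 := rfl

lemma cross (a b c u v w : ℂ) (hne : ¬(a = 0 ∧ b = 0 ∧ c = 0))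
    (h1 : c * v - b * w = 0) (h2 : -(c * u) + a * w = 0) (h3 : b * u - a * v = 0) :
    ∃ t : ℂ, u = t * a ∧ v = t * b ∧ w = t * c := by
  by_cases ha : a ≠ 0
  · refine ⟨u / a, by field_simp, ?_, ?_⟩
    · field_simp; linear_combination -h3
    · field_simp; linear_combination h2
  by_cases hb : b ≠ 0
  · refine ⟨v / b, ?_, by field_simp, ?_⟩
    · field_simp; linear_combination h3
    · field_simp; linear_combination -h1
  have hc : c ≠ 0 := by tauto
  refine ⟨w / c, ?_, ?_, by field_simp⟩
  · field_simp; linear_combination -h2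
  · field_simp; linear_combination h1

end MaxAux

open MaxAux Matrix

/-- for `ξ ≠ 0` the characteristic polynomial of the Maxwell symbol is
`X² (X² − |ξ|²)²`, so its eigenvalues are `|ξ|, 0, −|ξ|`, each of multiplicity two;
moreover its kernel is the two-dimensional subspace of `ℂ⁶` spanned by
`(ξ₁,ξ₂,ξ₃,0,0,0)` and `(0,0,0,ξ₁,ξ₂,ξ₃)`. -/
theorem maxwellSymbol_charpoly_and_kernel (ξ : EuclideanSpace ℝ (Fin 3)) (hξ : ξ ≠ 0) :
    (maxwellSymbol ξ).charpoly
        = X ^ 2 * (X ^ 2 - C ((‖ξ‖ ^ 2 : ℝ) : ℂ)) ^ 2 ∧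
      (maxwellSymbol ξ).charpoly.rootMultiplicity ((‖ξ‖ : ℝ) : ℂ) = 2 ∧
      (maxwellSymbol ξ).charpoly.rootMultiplicity 0 = 2 ∧
      (maxwellSymbol ξ).charpoly.rootMultiplicity (-((‖ξ‖ : ℝ) : ℂ)) = 2 ∧
      LinearMap.ker (maxwellSymbol ξ).mulVecLin
        = Submodule.span ℂ
            {![(ξ 0 : ℂ), (ξ 1 : ℂ), (ξ 2 : ℂ), 0, 0, 0],
             ![0, 0, 0, (ξ 0 : ℂ), (ξ 1 : ℂ), (ξ 2 : ℂ)]} ∧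
      Module.finrank ℂ (LinearMap.ker (maxwellSymbol ξ).mulVecLin) = 2 := by
  set a : ℂ := (ξ 0 : ℂ) with ha
  set b : ℂ := (ξ 1 : ℂ) with hb
  set c : ℂ := (ξ 2 : ℂ) with hc
  have hM : maxwellSymbol ξ = M6 a b c := rfl
  have hnormR : (‖ξ‖ : ℝ)^2 = ξ 0^2 + ξ 1^2 + ξ 2^2 := by
    rw [EuclideanSpace.norm_eq, Real.sq_sqrt (Finset.sum_nonneg fun i _ => sq_nonneg _)]
    simp [Fin.sum_univ_three, Real.norm_eq_abs, sq_abs]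
  have hnorm : ((‖ξ‖^2 : ℝ) : ℂ) = a^2 + b^2 + c^2 := by
    rw [hnormR]; push_cast; ring
  set r : ℂ := ((‖ξ‖ : ℝ) : ℂ) with hrdef
  have hr2 : r^2 = a^2 + b^2 + c^2 := by
    rw [hrdef, ← hnorm]; push_cast; ring
  have hrne : r ≠ 0 := by
    simp only [hrdef, ne_eq, Complex.ofReal_eq_zero]
    exact norm_ne_zero_iff.mpr hξ
  have hne : ¬(a = 0 ∧ b = 0 ∧ c = 0) := by
    rintro ⟨h0, h1, h2⟩
    have h0' : ξ 0 = 0 := by rw [ha] at h0; exact_mod_cast h0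
    have h1' : ξ 1 = 0 := by rw [hb] at h1; exact_mod_cast h1
    have h2' : ξ 2 = 0 := by rw [hc] at h2; exact_mod_cast h2
    apply hξ
    ext i
    fin_cases i <;> simp [h0', h1', h2']
  have hcp : (maxwellSymbol ξ).charpoly = X ^ 2 * (X ^ 2 - C ((‖ξ‖ ^ 2 : ℝ) : ℂ)) ^ 2 := by
    rw [hM, charpoly_M6, hnorm]
  have hCn : C ((‖ξ‖ ^ 2 : ℝ) : ℂ) = C r ^ 2 := by
    rw [← map_pow]; congr 1; rw [hrdef]; push_cast; ring
  have hrn : r ≠ -r := fun h => hrne (by linear_combination h / 2)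
  have h0r : (0 : ℂ) ≠ r := fun h => hrne h.symm
  have h0nr : (0 : ℂ) ≠ -r := fun h => hrne (by linear_combination h)
  set v1 : Fin 6 → ℂ := ![a, b, c, 0, 0, 0] with hv1
  set v2 : Fin 6 → ℂ := ![0, 0, 0, a, b, c] with hv2
  have hmem : ∀ x : Fin 6 → ℂ, (maxwellSymbol ξ).mulVec x = 0 →
      ∃ s t : ℂ, x = s • v1 + t • v2 := by
    intro x h
    have e0 := congrFun h 0
    have e1 := congrFun h 1
    have e2 := congrFun h 2
    have e3 := congrFun h 3
    have e4 := congrFun h 4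
    have e5 := congrFun h 5
    rw [hM] at e0 e1 e2 e3 e4 e5
    simp [M6, Matrix.mulVec, dotProduct, Fin.sum_univ_six,
      Matrix.cons_val_four] at e0 e1 e2 e3 e4 e5
    obtain ⟨t, ht0, ht1, ht2⟩ := cross a b c (x 3) (x 4) (x 5) hne
      (by linear_combination e0) (by linear_combination e1) (by linear_combination e2)
    obtain ⟨s, hs0, hs1, hs2⟩ := cross a b c (x 0) (x 1) (x 2) hne
      (by linear_combination -e3) (by linear_combination -e4) (by linear_combination -e5)
    refine ⟨s, t, ?_⟩
    funext i
    fin_cases i <;>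
      simp [hv1, hv2, hs0, hs1, hs2, ht0, ht1, ht2, mul_comm]
  have hzero : ∀ y ∈ ({v1, v2} : Set (Fin 6 → ℂ)), (maxwellSymbol ξ).mulVec y = 0 := by
    rintro y hy
    rcases hy with rfl | rfl <;>
    · funext i
      rw [hM]
      fin_cases i <;>
        · simp [M6, hv1, hv2, Matrix.mulVec, dotProduct, Fin.sum_univ_six,
            Matrix.cons_val_four, Matrix.vecHead, Matrix.vecTail]
          try ring
  have hker : LinearMap.ker (maxwellSymbol ξ).mulVecLin
      = Submodule.span ℂ {v1, v2} := by
    apply le_antisymm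
    · intro x hx
      obtain ⟨s, t, hst⟩ := hmem x (by simpa [Matrix.mulVecLin_apply] using hx)
      rw [hst]
      exact Submodule.add_mem _
        (Submodule.smul_mem _ _ (Submodule.subset_span (by simp)))
        (Submodule.smul_mem _ _ (Submodule.subset_span (by simp)))
    · rw [Submodule.span_le]
      intro y hy
      simp only [SetLike.mem_coe, LinearMap.mem_ker, Matrix.mulVecLin_apply]
      exact hzero y hy
  have hli : LinearIndependent ℂ ![v1, v2] := by
    rw [LinearIndependent.pair_iff]
    intro s t hst
    have k0 := congrFun hst 0
    have k1 := congrFun hst 1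
    have k2 := congrFun hst 2
    have k3 := congrFun hst 3
    have k4 := congrFun hst 4
    have k5 := congrFun hst 5
    simp only [hv1, hv2, Pi.add_apply, Pi.smul_apply, Matrix.cons_val_zero, Matrix.cons_val_one,
      Matrix.head_cons, Matrix.cons_val_two, Matrix.tail_cons, Matrix.cons_val_three,
      Matrix.cons_val_four, cons_val_five, Pi.zero_apply, smul_eq_mul, mul_zero, add_zero,
      zero_add] at k0 k1 k2 k3 k4 k5
    have habc : a ≠ 0 ∨ b ≠ 0 ∨ c ≠ 0 := by
      by_contra hh; push_neg at hh; exact hne hh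
    rcases habc with hA | hB | hC
    · exact ⟨(mul_eq_zero.mp k0).resolve_right hA, (mul_eq_zero.mp k3).resolve_right hA⟩
    · exact ⟨(mul_eq_zero.mp k1).resolve_right hB, (mul_eq_zero.mp k4).resolve_right hB⟩
    · exact ⟨(mul_eq_zero.mp k2).resolve_right hC, (mul_eq_zero.mp k5).resolve_right hC⟩
  have hrange : ({v1, v2} : Set (Fin 6 → ℂ)) = Set.range ![v1, v2] := by
    ext y
    simp [Fin.exists_fin_two, or_comm, eq_comm]
  refine ⟨hcp, ?_, ?_, ?_, ?_, ?_⟩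
  · rw [hcp, hCn, show (X ^ 2 * (X ^ 2 - C r ^ 2) ^ 2 : ℂ[X])
        = (X - C r)^2 * ((X - C 0)^2 * (X - C (-r))^2) by
      simp only [map_neg, map_zero]; ring]
    exact rm3 r 0 (-r) (fun h => hrne h) hrn
  · rw [hcp, hCn, show (X ^ 2 * (X ^ 2 - C r ^ 2) ^ 2 : ℂ[X])
        = (X - C 0)^2 * ((X - C r)^2 * (X - C (-r))^2) by
      simp only [map_neg, map_zero]; ring]
    exact rm3 0 r (-r) h0r h0nr
  · rw [hcp, hCn, show (X ^ 2 * (X ^ 2 - C r ^ 2) ^ 2 : ℂ[X])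
        = (X - C (-r))^2 * ((X - C 0)^2 * (X - C r)^2) by
      simp only [map_neg, map_zero]; ring]
    exact rm3 (-r) 0 r (fun h => hrne (by linear_combination -h)) (Ne.symm hrn)
  · -- kernel equality
    exact hker
  · -- finrank
    rw [hker, hrange, finrank_span_eq_card hli]
    simp

end
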